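/- Let F be a weakly union-closed family of nonempty subsets of a finite set N covering N, and let v: F → ℝ be a valuation with extension v̂: 2^N → ℝ. Then for every S ⊆ N, v̂(S) = Σ { v(F) : F maximal in F(S) }, where F(S) = {F ∈ F : F ⊆ S}. -/

import Mathlib

open scoped Classical

/-!
Inside `S`, two maximal members of `F(S)` that meet have their union in `F(S)`, so they coincide:
the maximal members of `F(S)` are pairwise disjoint. Since members are nonempty, every member of
`F(S)` lies below exactly one maximal member `M`, and the sum of `β` over `F(S)` splits into the
sums over the `F(M)`, which are the values `v M`.
-/

namespace Finset

variable {α : Type*} [DecidableEq α]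

def WeaklyUnionClosed (s : Finset (Finset α)) : Prop :=
  ∀ F ∈ s, ∀ G ∈ s, (F ∩ G).Nonempty → F ∪ G ∈ s

theorem WeaklyUnionClosed.filter_subset {s : Finset (Finset α)} (hs : s.WeaklyUnionClosed)
    (S : Finset α) : (s.filter (· ⊆ S)).WeaklyUnionClosed := by
  intro F hF G hG hFG
  rw [mem_filter] at hF hG ⊢
  exact ⟨hs F hF.1 G hG.1 hFG, union_subset hF.2 hG.2⟩

theorem WeaklyUnionClosed.eq_of_maximal {s : Finset (Finset α)} (hs : s.WeaklyUnionClosed)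
    {M M' : Finset α} (hM : Maximal (· ∈ s) M) (hM' : Maximal (· ∈ s) M')
    (hMM' : (M ∩ M').Nonempty) : M = M' := by
  have hunion : M ∪ M' ∈ s := hs M hM.prop M' hM'.prop hMM'
  exact (hM.eq_of_le hunion subset_union_left).trans
    (hM'.eq_of_le hunion subset_union_right).symm

theorem WeaklyUnionClosed.sum_eq_sum_maximal {β : Type*} [AddCommMonoid β]
    {s : Finset (Finset α)} (hs : s.WeaklyUnionClosed) (hne : ∀ F ∈ s, F.Nonempty)
    (f : Finset α → β) :
    ∑ F ∈ s, f F = ∑ M ∈ s.filter (Maximal (· ∈ s)), ∑ F ∈ s.filter (· ⊆ M), f F := by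
  have hpartition : s = (s.filter (Maximal (· ∈ s))).biUnion (fun M => s.filter (· ⊆ M)) := by
    ext F
    simp only [mem_biUnion, mem_filter]
    refine ⟨fun hF => ?_, fun ⟨_, _, hF, _⟩ => hF⟩
    obtain ⟨M, hFM, hM⟩ := s.exists_le_maximal hF
    exact ⟨M, ⟨hM.prop, hM⟩, hF, hFM⟩
  rw [← sum_biUnion, ← hpartition]
  intro M hM M' hM' hne'
  rw [mem_coe, mem_filter] at hM hM'
  refine disjoint_left.2 fun F hFM hFM' => hne' ?_
  rw [mem_filter] at hFM hFM'
  obtain ⟨x, hx⟩ := hne F hFM.1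
  exact hs.eq_of_maximal hM.2 hM'.2 ⟨x, mem_inter.2 ⟨hFM.2 hx, hFM'.2 hx⟩⟩

theorem maximal_mem_filter_subset_iff {s : Finset (Finset α)} {S F : Finset α} :
    Maximal (· ∈ s.filter (· ⊆ S)) F ↔
      F ∈ s ∧ F ⊆ S ∧ ∀ F' ∈ s, F' ⊆ S → F ⊆ F' → F = F' := by
  simp only [Maximal, mem_filter, and_assoc]
  refine ⟨fun ⟨hF, hFS, hmax⟩ => ⟨hF, hFS, fun F' hF' hF'S hFF' => ?_⟩,
    fun ⟨hF, hFS, hmax⟩ => ⟨hF, hFS, fun F' hF' hFF' => (hmax F' hF'.1 hF'.2 hFF').symm.subset⟩⟩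
  exact hFF'.antisymm (hmax ⟨hF', hF'S⟩ hFF')

theorem filter_maximal_mem_filter_subset (s : Finset (Finset α)) (S : Finset α) :
    (s.filter (· ⊆ S)).filter (Maximal (· ∈ s.filter (· ⊆ S))) =
      s.filter (fun F => F ⊆ S ∧ ∀ F' ∈ s, F' ⊆ S → F ⊆ F' → F = F') := by
  ext F
  rw [mem_filter, maximal_mem_filter_subset_iff]
  refine ⟨fun h => mem_filter.2 h.2, fun h => ?_⟩
  obtain ⟨hF, hFS, hmax⟩ := mem_filter.1 h
  exact ⟨mem_filter.2 ⟨hF, hFS⟩, hF, hFS, hmax⟩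

end Finset

open Finset in
theorem stmt_11 {N : Type*} [Fintype N] [DecidableEq N]
    (Fam : Finset (Finset N)) (hne : ∀ F ∈ Fam, F.Nonempty)
    (hwuc : ∀ F ∈ Fam, ∀ G ∈ Fam, (F ∩ G).Nonempty → F ∪ G ∈ Fam)
    (v β : Finset N → ℝ)
    (hrep : ∀ G ∈ Fam, v G = ∑ F ∈ Fam.filter (fun F => F ⊆ G), β F)
    (S : Finset N) :
    (∑ F ∈ Fam.filter (fun F => F ⊆ S), β F) =
      ∑ F ∈ Fam.filter (fun F => F ⊆ S ∧ ∀ F' ∈ Fam, F' ⊆ S → F ⊆ F' → F = F'), v F := by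
  rw [(WeaklyUnionClosed.filter_subset hwuc S).sum_eq_sum_maximal
    (fun F hF => hne F (mem_filter.1 hF).1), filter_maximal_mem_filter_subset]
  -- the two filters agree up to their `Decidable` instances
  refine sum_congr (by congr!) fun M hM => ?_
  obtain ⟨hM, hMS, -⟩ := mem_filter.1 hM
  rw [hrep M hM, filter_filter]
  congr 1
  exact filter_congr fun F _ => ⟨And.right, fun hFM => ⟨hFM.trans hMS, hFM⟩⟩
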